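/- arXiv:1111.6306 — 9 statements merged into one kernel-verified Lean document; each statement's English description precedes it below -/
import Mathlib

section
/- For a Theta neuron with positive baseline current I > 0, the free evolution θ(t) = 2·arctan(tan(√I·t)/√I) (extended continuously across the singularities of tan) satisfies the ODE dθ/dt = (1+I) + (1−I)·cos θ with θ(0) = 0. -/
/-!
Write `r = √I` and `s = r t`. Half of the candidate is the polar angle of the point
`(r cos s, sin s)`, whose tangent is `tan s / r`; this point never leaves the open half-plane
facing the direction `s`, which gives a continuous, even smooth, choice of that angle on all of `ℝ`.
The angle of a planar curve `(a, b)` has derivative `(a b' - b a') / (a² + b²)`, here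
`r / (r² cos² s + sin² s)`, and `cos θ = (r² cos² s - sin² s) / (r² cos² s + sin² s)`; the ODE
is then an identity between rational functions of `cos s` and `sin s`.
-/

open Real

theorem Real.cos_arctan_div {x y : ℝ} (hx : 0 < x) :
    cos (arctan (y / x)) = x / √(x ^ 2 + y ^ 2) := by
  have h : 1 + (y / x) ^ 2 = (x ^ 2 + y ^ 2) / x ^ 2 := by field_simp
  rw [cos_arctan, h, sqrt_div' _ (sq_nonneg x), sqrt_sq hx.le, one_div_div]

theorem Real.sin_arctan_div {x y : ℝ} (hx : 0 < x) :
    sin (arctan (y / x)) = y / √(x ^ 2 + y ^ 2) := by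
  have h : 1 + (y / x) ^ 2 = (x ^ 2 + y ^ 2) / x ^ 2 := by field_simp
  rw [sin_arctan, h, sqrt_div' _ (sq_nonneg x), sqrt_sq hx.le]
  field_simp

theorem HasDerivAt.arctan_div {f g : ℝ → ℝ} {f' g' x : ℝ} (hf : HasDerivAt f f' x)
    (hg : HasDerivAt g g' x) (hx : g x ≠ 0) :
    HasDerivAt (fun y => Real.arctan (f y / g y))
      ((f' * g x - f x * g') / (g x ^ 2 + f x ^ 2)) x := by
  refine (hf.fun_div hg hx).arctan.congr_deriv ?_
  field_simp

theorem Real.exists_eq_add_int_mul_pi_of_tan_eq {x y : ℝ} (hx : cos x ≠ 0) (hy : cos y ≠ 0)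
    (h : tan x = tan y) : ∃ k : ℤ, x = y + k * π := by
  have hsin : sin (x - y) = 0 := by
    rw [tan_eq_sin_div_cos, tan_eq_sin_div_cos, div_eq_div_iff hx hy] at h
    rw [sin_sub, h, mul_comm, sub_self]
  obtain ⟨k, hk⟩ := sin_eq_zero_iff.1 hsin
  exact ⟨k, by linarith⟩

/-- The polar angle of `(a, b)` chosen within `π / 2` of `s`, meaningful when `(a, b)` has
positive inner product with `(cos s, sin s)`: the arctangent measures the angle between the two
vectors, as cross product over inner product. -/
noncomputable def argNear (s a b : ℝ) : ℝ :=
  s + arctan ((b * cos s - a * sin s) / (a * cos s + b * sin s))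

section argNear

variable {s a b : ℝ}

private lemma dot_sq_add_cross_sq (s a b : ℝ) :
    (a * cos s + b * sin s) ^ 2 + (b * cos s - a * sin s) ^ 2 = a ^ 2 + b ^ 2 := by
  linear_combination (a ^ 2 + b ^ 2) * sin_sq_add_cos_sq s

private lemma sq_add_sq_pos_of_dot_pos (h : 0 < a * cos s + b * sin s) : 0 < a ^ 2 + b ^ 2 := by
  rw [← dot_sq_add_cross_sq s]; positivity

theorem cos_argNear (h : 0 < a * cos s + b * sin s) :
    cos (argNear s a b) = a / √(a ^ 2 + b ^ 2) := by
  rw [argNear, cos_add, cos_arctan_div h, sin_arctan_div h, dot_sq_add_cross_sq]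
  have := sqrt_pos.2 (sq_add_sq_pos_of_dot_pos h)
  field_simp
  linear_combination a * sin_sq_add_cos_sq s

theorem sin_argNear (h : 0 < a * cos s + b * sin s) :
    sin (argNear s a b) = b / √(a ^ 2 + b ^ 2) := by
  rw [argNear, sin_add, cos_arctan_div h, sin_arctan_div h, dot_sq_add_cross_sq]
  have := sqrt_pos.2 (sq_add_sq_pos_of_dot_pos h)
  field_simp
  linear_combination b * sin_sq_add_cos_sq s

end argNear

theorem hasDerivAt_argNear {a b : ℝ → ℝ} {a' b' x : ℝ} (ha : HasDerivAt a a' x)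
    (hb : HasDerivAt b b' x) (h : 0 < a x * cos x + b x * sin x) :
    HasDerivAt (fun s => argNear s (a s) (b s))
      ((a x * b' - b x * a') / (a x ^ 2 + b x ^ 2)) x := by
  have hc := hasDerivAt_cos x
  have hs := hasDerivAt_sin x
  have := (hasDerivAt_id' x).fun_add
    (HasDerivAt.arctan_div ((hb.fun_mul hc).fun_sub (ha.fun_mul hs))
      ((ha.fun_mul hc).fun_add (hb.fun_mul hs)) h.ne')
  refine this.congr_deriv ?_
  have hq := (sq_add_sq_pos_of_dot_pos h).ne'
  rw [dot_sq_add_cross_sq]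
  field_simp
  linear_combination (a x * b' - b x * a' - a x ^ 2 - b x ^ 2) * sin_sq_add_cos_sq x

/-- `θ(t) / 2` as a function of `s = √I t`, with `r = √I`. -/
noncomputable def halfPhase (r s : ℝ) : ℝ := argNear s (r * cos s) (sin s)

section halfPhase

variable {r : ℝ} (hr : 0 < r) (s : ℝ)
include hr

private lemma halfPhase_dot_pos : 0 < r * cos s * cos s + sin s * sin s := by
  rcases eq_or_ne (cos s) 0 with hc | hc
  · nlinarith [sin_sq_add_cos_sq s]
  · have := mul_pos hr (mul_self_pos.2 hc)
    nlinarith [mul_self_nonneg (sin s)]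

private lemma halfPhase_norm_sq_pos : 0 < r ^ 2 * cos s ^ 2 + sin s ^ 2 := by
  rw [← mul_pow]
  exact sq_add_sq_pos_of_dot_pos (halfPhase_dot_pos hr s)

theorem cos_halfPhase : cos (halfPhase r s) = r * cos s / √(r ^ 2 * cos s ^ 2 + sin s ^ 2) := by
  rw [← mul_pow]
  exact cos_argNear (halfPhase_dot_pos hr s)

theorem sin_halfPhase : sin (halfPhase r s) = sin s / √(r ^ 2 * cos s ^ 2 + sin s ^ 2) := by
  rw [← mul_pow]
  exact sin_argNear (halfPhase_dot_pos hr s)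

theorem tan_halfPhase : tan (halfPhase r s) = tan s / r := by
  have := sqrt_pos.2 (halfPhase_norm_sq_pos hr s)
  rw [tan_eq_sin_div_cos, cos_halfPhase hr, sin_halfPhase hr, tan_eq_sin_div_cos]
  field_simp

theorem hasDerivAt_halfPhase :
    HasDerivAt (halfPhase r) (r / (r ^ 2 * cos s ^ 2 + sin s ^ 2)) s := by
  refine (hasDerivAt_argNear ((hasDerivAt_cos s).const_mul r) (hasDerivAt_sin s)
    (halfPhase_dot_pos hr s)).congr_deriv ?_
  rw [mul_pow]
  congr 1
  linear_combination r * sin_sq_add_cos_sq s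

end halfPhase

/-- For a Theta neuron with positive baseline current `I > 0`, the free evolution
`θ(t) = 2·arctan(tan(√I·t)/√I)`, extended continuously across the singularities of `tan`,
satisfies `dθ/dt = (1+I) + (1−I)·cos θ` with `θ(0) = 0`. -/
theorem theta_neuron_free_evolution (I : ℝ) (hI : 0 < I) :
    ∃ θ : ℝ → ℝ, Continuous θ ∧ θ 0 = 0 ∧
      (∀ t : ℝ, HasDerivAt θ ((1 + I) + (1 - I) * Real.cos (θ t)) t) ∧
      (∀ t : ℝ, Real.cos (Real.sqrt I * t) ≠ 0 →
        ∃ k : ℤ, θ t = 2 * Real.arctan (Real.tan (Real.sqrt I * t) / Real.sqrt I)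
          + 2 * π * k) := by
  set r := √I
  have hr : 0 < r := sqrt_pos.2 hI
  have hrI : r ^ 2 = I := sq_sqrt hI.le
  have hθ (t : ℝ) : HasDerivAt (fun t => 2 * halfPhase r (r * t))
      ((1 + I) + (1 - I) * cos (2 * halfPhase r (r * t))) t := by
    refine (((hasDerivAt_halfPhase hr (r * t)).comp t
      ((hasDerivAt_id t).const_mul r)).const_mul 2).congr_deriv ?_
    have hQ := halfPhase_norm_sq_pos hr (r * t)
    rw [cos_two_mul, cos_halfPhase hr, div_pow, sq_sqrt hQ.le, ← hrI]
    field_simp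
    linear_combination -2 * r ^ 2 * sin_sq_add_cos_sq (r * t)
  refine ⟨_, continuous_iff_continuousAt.2 fun t => (hθ t).continuousAt,
    by simp [halfPhase, argNear], hθ, fun t hc => ?_⟩
  have hcos : cos (halfPhase r (r * t)) ≠ 0 := by
    rw [cos_halfPhase hr]
    exact div_ne_zero (mul_ne_zero hr.ne' hc)
      (sqrt_pos.2 (halfPhase_norm_sq_pos hr (r * t))).ne'
  obtain ⟨k, hk⟩ := exists_eq_add_int_mul_pi_of_tan_eq hcos (cos_arctan_pos _).ne'
    (by rw [tan_arctan, tan_halfPhase hr])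
  exact ⟨k, by rw [hk]; ring⟩
end

section
/- For a Theta neuron with negative baseline current I < 0, the function θ(t) = 2·arctan(tanh(√(−I)·t)/√(−I)) solves dθ/dt = (1+I) + (1−I)cos θ with θ(0) = 0, and θ(t) is bounded (in particular θ(t) < 2π for all t ≥ 0), so no spike occurs without input. -/
/-!
Under the substitution `u = tan (θ / 2)` the theta-neuron equation becomes the Riccati equation
`u' = 1 + I u²`, which for `I < 0` is solved by `u = tanh (√(-I) t) / √(-I)`. Since
`θ = 2 arctan u` takes values in `(-π, π)`, it never reaches `2π`.
-/

open Real

theorem Real.hasDerivAt_tanh (x : ℝ) : HasDerivAt tanh (1 - tanh x ^ 2) x := by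
  have hcosh : cosh x ≠ 0 := (cosh_pos x).ne'
  have h := (hasDerivAt_sinh x).div (hasDerivAt_cosh x) hcosh
  rw [show sinh / cosh = tanh from funext fun y => (tanh_eq_sinh_div_cosh y).symm] at h
  refine h.congr_deriv ?_
  rw [tanh_eq_sinh_div_cosh]
  field_simp

theorem Real.cos_two_mul_arctan (x : ℝ) : cos (2 * arctan x) = (1 - x ^ 2) / (1 + x ^ 2) := by
  have hx : 1 + x ^ 2 ≠ 0 := by positivity
  rw [cos_two_mul, cos_sq_arctan]
  field_simp
  ring

theorem hasDerivAt_two_mul_arctan_of_riccati {u : ℝ → ℝ} {a b t : ℝ}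
    (hu : HasDerivAt u (a + b * u t ^ 2) t) :
    HasDerivAt (fun t => 2 * arctan (u t))
      ((a + b) + (a - b) * cos (2 * arctan (u t))) t := by
  have hx : 1 + u t ^ 2 ≠ 0 := by positivity
  refine ((hu.arctan).const_mul 2).congr_deriv ?_
  rw [cos_two_mul_arctan]
  field_simp
  ring

theorem hasDerivAt_tanh_mul_div {s : ℝ} (hs : s ≠ 0) (t : ℝ) :
    HasDerivAt (fun t => tanh (s * t) / s) (1 - s ^ 2 * (tanh (s * t) / s) ^ 2) t := by
  have h := ((hasDerivAt_tanh (s * t)).comp t ((hasDerivAt_id t).const_mul s)).div_const s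
  refine h.congr_deriv ?_
  field_simp

theorem abs_two_mul_arctan_le (x : ℝ) : |2 * arctan x| ≤ π := by
  have := neg_pi_div_two_lt_arctan x
  have := arctan_lt_pi_div_two x
  rw [abs_le]; constructor <;> linarith

/-- For a Theta neuron with negative baseline current `I < 0`, the function
`θ(t) = 2·arctan(tanh(√(−I)·t)/√(−I))` solves `dθ/dt = (1+I) + (1−I)cos θ` with `θ(0) = 0`,
and `θ(t)` is bounded (in particular `θ(t) < 2π` for all `t ≥ 0`), so no spike occurs. -/
theorem theta_neuron_negative_current_no_spike (I : ℝ) (hI : I < 0)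
    (θ : ℝ → ℝ)
    (hθ : θ = fun t => 2 * Real.arctan (Real.tanh (Real.sqrt (-I) * t) / Real.sqrt (-I))) :
    θ 0 = 0 ∧
    (∀ t : ℝ, HasDerivAt θ ((1 + I) + (1 - I) * Real.cos (θ t)) t) ∧
    (∃ C : ℝ, ∀ t : ℝ, |θ t| ≤ C) ∧
    (∀ t : ℝ, 0 ≤ t → θ t < 2 * π) := by
  subst hθ
  have hs : √(-I) ≠ 0 := (sqrt_pos.2 (neg_pos.2 hI)).ne'
  refine ⟨by simp, fun t => ?_, ⟨π, fun t => abs_two_mul_arctan_le _⟩, fun t _ => ?_⟩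
  · have hu : HasDerivAt (fun t => tanh (√(-I) * t) / √(-I))
        (1 + I * (tanh (√(-I) * t) / √(-I)) ^ 2) t := by
      refine (hasDerivAt_tanh_mul_div hs t).congr_deriv ?_
      rw [sq_sqrt (neg_nonneg.2 hI.le)]
      ring
    exact hasDerivAt_two_mul_arctan_of_riccati hu
  · calc _ ≤ π := (le_abs_self _).trans (abs_two_mul_arctan_le _)
      _ < 2 * π := by linarith [pi_pos]
end

section
/- Under the coordinate change θ(φ) = 2·arctan(√I·tan(φ/2 − π/2)) + π (continuously extended), the Theta neuron equation dθ/dt = (1+I) + (1−I)cos θ + (1 − cos θ)·u(t) with I > 0 transforms into the SNIPER phase equation dφ/dt = ω + (2/ω)(1 − cos φ)·u(t), where ω = 2√I. -/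
open Real

/-! With `a = φ/2` and `D = sin² a + I cos² a`, the substitution `tan (a - π/2) = -cot a` makes
everything rational in `sin a, cos a`: `θ'(φ) = √I / D`, `cos θ = (I cos² a - sin² a) / D` and
`1 - cos φ = 2 sin² a`, so both sides of the identity equal `(2I + 2 sin² a · u) / D`. -/

theorem cos_two_mul_arctan_add_pi (y : ℝ) :
    cos (2 * arctan y + π) = (y ^ 2 - 1) / (1 + y ^ 2) := by
  rw [cos_add_pi, cos_two_mul, cos_arctan, div_pow, one_pow, sq_sqrt (by positivity)]
  field_simp
  ring

theorem tan_sub_pi_div_two (x : ℝ) : tan (x - π / 2) = -(cos x / sin x) := by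
  rw [tan_eq_sin_div_cos, sin_sub_pi_div_two, cos_sub_pi_div_two, neg_div]

noncomputable def phaseToTheta (s φ : ℝ) : ℝ := 2 * arctan (s * tan (φ / 2 - π / 2)) + π

theorem hasDerivAt_phaseToTheta (s : ℝ) {φ : ℝ} (hφ : sin (φ / 2) ≠ 0) :
    HasDerivAt (phaseToTheta s) (s / (sin (φ / 2) ^ 2 + s ^ 2 * cos (φ / 2) ^ 2)) φ := by
  have hcos : cos (φ / 2 - π / 2) ≠ 0 := by rwa [cos_sub_pi_div_two]
  have hshift : HasDerivAt (fun φ : ℝ => φ / 2 - π / 2) (1 / 2) φ := by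
    simpa using ((hasDerivAt_id φ).div_const 2).sub_const (π / 2)
  have hchain := (((hasDerivAt_tan hcos).comp φ hshift).const_mul s).arctan.const_mul 2
    |>.add_const π
  refine hchain.congr_deriv ?_
  simp only [Function.comp_apply]
  rw [tan_sub_pi_div_two, cos_sub_pi_div_two]
  field_simp

theorem cos_phaseToTheta (s : ℝ) {φ : ℝ} (hφ : sin (φ / 2) ≠ 0) :
    cos (phaseToTheta s φ) =
      (s ^ 2 * cos (φ / 2) ^ 2 - sin (φ / 2) ^ 2) / (sin (φ / 2) ^ 2 + s ^ 2 * cos (φ / 2) ^ 2) := by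
  rw [phaseToTheta, cos_two_mul_arctan_add_pi, tan_sub_pi_div_two]
  field_simp

theorem one_sub_cos_eq_two_mul_sin_half_sq (φ : ℝ) : 1 - cos φ = 2 * sin (φ / 2) ^ 2 := by
  rw [sin_sq, cos_sq, show 2 * (φ / 2) = φ by ring]
  ring

/-- Under the coordinate change `θ(φ) = 2·arctan(√I·tan(φ/2 − π/2)) + π` (away from the
singularities of `tan`, i.e. where `sin(φ/2) ≠ 0`), the Theta neuron equation
`dθ/dt = (1+I) + (1−I)cos θ + (1 − cos θ)·u` with `I > 0` transforms into the SNIPER phase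
equation `dφ/dt = ω + (2/ω)(1 − cos φ)·u`, where `ω = 2√I`: the chain rule identity
`θ'(φ)·(ω + (2/ω)(1 − cos φ)u) = (1+I) + (1−I)cos(θ(φ)) + (1 − cos(θ(φ)))u` holds. -/
theorem theta_to_sniper_transformation (I : ℝ) (hI : 0 < I) (ω : ℝ) (hω : ω = 2 * Real.sqrt I)
    (T : ℝ → ℝ)
    (hT : T = fun φ => 2 * Real.arctan (Real.sqrt I * Real.tan (φ / 2 - π / 2)) + π) :
    ∀ φ u : ℝ, Real.sin (φ / 2) ≠ 0 →
      deriv T φ * (ω + (2 / ω) * (1 - Real.cos φ) * u)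
        = (1 + I) + (1 - I) * Real.cos (T φ) + (1 - Real.cos (T φ)) * u := by
  intro φ u hφ
  obtain ⟨s, hs, rfl⟩ : ∃ s, 0 < s ∧ I = s ^ 2 := ⟨√I, sqrt_pos.2 hI, (sq_sqrt hI.le).symm⟩
  rw [sqrt_sq hs.le] at hT hω
  obtain rfl : T = phaseToTheta s := hT
  subst hω
  rw [(hasDerivAt_phaseToTheta s hφ).deriv, cos_phaseToTheta s hφ,
    one_sub_cos_eq_two_mul_sin_half_sq]
  have hD : 0 < sin (φ / 2) ^ 2 + s ^ 2 * cos (φ / 2) ^ 2 := by positivity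
  field_simp
  linear_combination (-2 * s ^ 2) * sin_sq_add_cos_sq (φ / 2)
end

section
/- For the ensemble of Theta neurons with drift f(Θ) = (αᵢ + βᵢ cos θᵢ)ᵢ and control field Z(Θ) = (1 − cos θᵢ)ᵢ, where αᵢ = 1 + Iᵢ and βᵢ = 1 − Iᵢ, the iterated Lie brackets satisfy ad_f^{2k−1} Z = ((−1)^{k−1} 2^k (αᵢ − βᵢ)^{k−1} sin θᵢ)ᵢ and ad_f^{2k} Z = ((−1)^{k−1} 2^k (αᵢ − βᵢ)^{k−1}(αᵢ cos θᵢ + βᵢ))ᵢ for all positive integers k. -/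
open Real

/-- The Lie bracket `[g,h] = (Dh)g − (Dg)h` of vector fields on `ℝⁿ`. -/
noncomputable def lieBracketVF {n : ℕ} (g h : (Fin n → ℝ) → (Fin n → ℝ)) :
    (Fin n → ℝ) → (Fin n → ℝ) :=
  fun Θ => fderiv ℝ h Θ (g Θ) - fderiv ℝ g Θ (h Θ)

/-- Iterated Lie brackets `ad_f^k Z`, with `ad_f^0 Z = Z`. -/
noncomputable def adVF {n : ℕ} (f Z : (Fin n → ℝ) → (Fin n → ℝ)) :
    ℕ → (Fin n → ℝ) → (Fin n → ℝ)
  | 0 => Z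
  | k + 1 => lieBracketVF f (adVF f Z k)

/-! On each coordinate, `ad_f` preserves the span of `sin θ` and `α cos θ + β`, acting there by
`c sin θ ↦ c (α cos θ + β) ↦ c (β² − α²) sin θ`; since `[f, Z] = (α + β) sin θ`, this gives
`ad_f^{2m+1} Z = (α + β)(β² − α²)^m sin θ`. For the Theta neuron `α + β = 2`, so
`β² − α² = −2 (α − β)`. -/

theorem hasFDerivAt_pi_diag {ι : Type*} [Fintype ι] (F F' : ι → ℝ → ℝ)
    (hF : ∀ i x, HasDerivAt (F i) (F' i x) x) (Θ : ι → ℝ) :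
    HasFDerivAt (fun Θ : ι → ℝ => fun i => F i (Θ i))
      (ContinuousLinearMap.pi fun i => F' i (Θ i) • (ContinuousLinearMap.proj i : (ι → ℝ) →L[ℝ] ℝ))
      Θ :=
  hasFDerivAt_pi.2 fun i => (hF i (Θ i)).comp_hasFDerivAt Θ (hasFDerivAt_apply i Θ)

section

variable {n : ℕ}

theorem lieBracketVF_diag (G H G' H' : Fin n → ℝ → ℝ)
    (hG : ∀ i x, HasDerivAt (G i) (G' i x) x) (hH : ∀ i x, HasDerivAt (H i) (H' i x) x) :
    lieBracketVF (fun Θ i => G i (Θ i)) (fun Θ i => H i (Θ i))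
      = fun Θ i => H' i (Θ i) * G i (Θ i) - G' i (Θ i) * H i (Θ i) := by
  funext Θ i
  simp only [lieBracketVF, (hasFDerivAt_pi_diag G G' hG Θ).fderiv,
    (hasFDerivAt_pi_diag H H' hH Θ).fderiv, Pi.sub_apply, ContinuousLinearMap.pi_apply,
    smul_apply, ContinuousLinearMap.proj_apply, smul_eq_mul]

variable (α β : Fin n → ℝ)

theorem hasDerivAt_theta_drift (i : Fin n) (x : ℝ) :
    HasDerivAt (fun x => α i + β i * cos x) (β i * -sin x) x :=
  ((hasDerivAt_cos x).const_mul (β i)).const_add (α i)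

theorem lieBracketVF_theta_drift_one_sub_cos :
    lieBracketVF (fun Θ i => α i + β i * cos (Θ i)) (fun Θ i => 1 - cos (Θ i))
      = fun Θ i => (α i + β i) * sin (Θ i) := by
  rw [lieBracketVF_diag (fun i x => α i + β i * cos x) (fun _ x => 1 - cos x) _
    (fun _ x => -(-sin x)) (hasDerivAt_theta_drift α β) fun _ x => (hasDerivAt_cos x).const_sub 1]
  funext Θ i
  ring

theorem lieBracketVF_theta_drift_sin (c : Fin n → ℝ) :
    lieBracketVF (fun Θ i => α i + β i * cos (Θ i)) (fun Θ i => c i * sin (Θ i))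
      = fun Θ i => c i * (α i * cos (Θ i) + β i) := by
  rw [lieBracketVF_diag (fun i x => α i + β i * cos x) (fun i x => c i * sin x) _
    (fun i x => c i * cos x) (hasDerivAt_theta_drift α β)
    fun i x => (hasDerivAt_sin x).const_mul (c i)]
  funext Θ i
  linear_combination c i * β i * sin_sq_add_cos_sq (Θ i)

theorem lieBracketVF_theta_drift_cos (c : Fin n → ℝ) :
    lieBracketVF (fun Θ i => α i + β i * cos (Θ i))
        (fun Θ i => c i * (α i * cos (Θ i) + β i))
      = fun Θ i => c i * (β i ^ 2 - α i ^ 2) * sin (Θ i) := by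
  rw [lieBracketVF_diag (fun i x => α i + β i * cos x)
    (fun i x => c i * (α i * cos x + β i)) _ (fun i x => c i * (α i * -sin x))
    (hasDerivAt_theta_drift α β)
    fun i x => (((hasDerivAt_cos x).const_mul (α i)).add_const (β i)).const_mul (c i)]
  funext Θ i
  ring

theorem adVF_theta_drift_odd (m : ℕ) :
    adVF (fun Θ i => α i + β i * cos (Θ i)) (fun Θ i => 1 - cos (Θ i)) (2 * m + 1)
      = fun Θ i => (α i + β i) * (β i ^ 2 - α i ^ 2) ^ m * sin (Θ i) := by
  induction m with
  | zero =>
    change lieBracketVF _ (fun Θ i => 1 - cos (Θ i)) = _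
    simpa using lieBracketVF_theta_drift_one_sub_cos α β
  | succ m ih =>
    change lieBracketVF _ (lieBracketVF _ (adVF _ _ (2 * m + 1))) = _
    rw [ih, lieBracketVF_theta_drift_sin α β fun i => (α i + β i) * (β i ^ 2 - α i ^ 2) ^ m,
      lieBracketVF_theta_drift_cos]
    funext Θ i
    ring

theorem adVF_theta_drift_even (m : ℕ) :
    adVF (fun Θ i => α i + β i * cos (Θ i)) (fun Θ i => 1 - cos (Θ i)) (2 * m + 2)
      = fun Θ i => (α i + β i) * (β i ^ 2 - α i ^ 2) ^ m * (α i * cos (Θ i) + β i) := by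
  change lieBracketVF _ (adVF _ _ (2 * m + 1)) = _
  rw [adVF_theta_drift_odd]
  exact lieBracketVF_theta_drift_sin α β _

end

/-- For the ensemble of Theta neurons with drift `f(Θ)ᵢ = αᵢ + βᵢ cos θᵢ` and control field
`Z(Θ)ᵢ = 1 − cos θᵢ`, where `αᵢ = 1 + Iᵢ` and `βᵢ = 1 − Iᵢ`, the iterated Lie brackets are
`ad_f^{2k−1} Z = ((−1)^{k−1} 2^k (αᵢ − βᵢ)^{k−1} sin θᵢ)ᵢ` and
`ad_f^{2k} Z = ((−1)^{k−1} 2^k (αᵢ − βᵢ)^{k−1}(αᵢ cos θᵢ + βᵢ))ᵢ` for all `k ≥ 1`. -/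
theorem theta_ensemble_lie_brackets (n : ℕ) (I : Fin n → ℝ)
    (α β : Fin n → ℝ) (hα : ∀ i, α i = 1 + I i) (hβ : ∀ i, β i = 1 - I i)
    (f Z : (Fin n → ℝ) → (Fin n → ℝ))
    (hf : f = fun Θ i => α i + β i * Real.cos (Θ i))
    (hZ : Z = fun Θ i => 1 - Real.cos (Θ i)) :
    ∀ k : ℕ, 1 ≤ k →
      (adVF f Z (2 * k - 1)
        = fun Θ i => (-1 : ℝ) ^ (k - 1) * 2 ^ k * (α i - β i) ^ (k - 1) * Real.sin (Θ i)) ∧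
      (adVF f Z (2 * k)
        = fun Θ i => (-1 : ℝ) ^ (k - 1) * 2 ^ k * (α i - β i) ^ (k - 1)
            * (α i * Real.cos (Θ i) + β i)) := by
  subst hf hZ
  intro k hk
  obtain ⟨m, rfl⟩ := Nat.exists_eq_add_of_le' hk
  have hsum : ∀ i, α i + β i = 2 := fun i => by rw [hα, hβ]; ring
  have hcoeff : ∀ i, (α i + β i) * (β i ^ 2 - α i ^ 2) ^ m
      = (-1 : ℝ) ^ m * 2 ^ (m + 1) * (α i - β i) ^ m := fun i => by
    rw [show β i ^ 2 - α i ^ 2 = -1 * (α i + β i) * (α i - β i) by ring, hsum,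
      mul_pow, mul_pow]
    ring
  rw [show 2 * (m + 1) - 1 = 2 * m + 1 by omega, show 2 * (m + 1) = 2 * m + 2 by omega,
    Nat.add_sub_cancel, adVF_theta_drift_odd, adVF_theta_drift_even]
  simp only [hcoeff, and_self]
end

section
/- If ω₁, …, ωₙ are distinct positive reals, then for every Θ = (θ₁,…,θₙ) ∈ ℝⁿ, the vectors v_k(Θ) = ((ωᵢ²/2)^{k−1} sin θᵢ)ᵢ and w_k(Θ) = ((ωᵢ²/2)^{k−1}((1 + ωᵢ²/4)cos θᵢ + 1 − ωᵢ²/4))ᵢ for k = 1, 2, 3, …, together with f(Θ) = (1 + ωᵢ²/4 + (1 − ωᵢ²/4)cos θᵢ)ᵢ, span ℝⁿ. -/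
/-!
Since the `μᵢ = ωᵢ²/2` are pairwise distinct, Lagrange interpolation turns linear combinations of
the vectors `(μᵢ^k aᵢ)ᵢ` into every `aⱼ eⱼ`. Hence the span of the `v_k` and `w_k` contains the
basis vector `eⱼ` as soon as `sin θⱼ` or `αⱼ cos θⱼ + βⱼ` is nonzero, where `αⱼ = 1 + ωⱼ²/4` and
`βⱼ = 1 - ωⱼ²/4`.
Both vanish only if `cos θⱼ = ±1` and `βⱼ = ∓αⱼ`, which `αⱼ + βⱼ = 2` and `αⱼ - βⱼ = ωⱼ²/2 ≠ 0`
rule out.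
-/

open Polynomial Set Submodule

section PowMulSpan

variable {K ι : Type*} [Field K]

theorem eval_mul_mem_span_pow_mul (μ a : ι → K) (p : K[X]) :
    (fun i => p.eval (μ i) * a i) ∈ span K (range fun (k : ℕ) i => μ i ^ k * a i) := by
  have hp : (fun i => p.eval (μ i) * a i) =
      ∑ k ∈ Finset.range (p.natDegree + 1), p.coeff k • fun i => μ i ^ k * a i := by
    ext i
    simp only [eval_eq_sum_range, Finset.sum_mul, Finset.sum_apply, Pi.smul_apply, smul_eq_mul,
      mul_assoc]
  rw [hp]
  exact sum_mem fun k _ => smul_mem _ _ (subset_span (mem_range_self k))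

theorem single_mem_span_pow_mul [Fintype ι] [DecidableEq ι] {μ : ι → K} (hμ : μ.Injective) (a : ι → K)
    (j : ι) : Pi.single j (a j) ∈ span K (range fun (k : ℕ) i => μ i ^ k * a i) := by
  convert eval_mul_mem_span_pow_mul μ a (Lagrange.basis Finset.univ μ j) using 1
  ext i
  rcases eq_or_ne i j with rfl | hij
  · simp [Lagrange.eval_basis_self hμ.injOn (Finset.mem_univ i)]
  · simp [hij, Lagrange.eval_basis_of_ne hij.symm (Finset.mem_univ i)]

theorem span_pow_mul_union_eq_top [Fintype ι] {μ a b : ι → K} (hμ : μ.Injective)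
    (hab : ∀ i, a i ≠ 0 ∨ b i ≠ 0) :
    span K (range (fun (k : ℕ) i => μ i ^ k * a i) ∪ range fun (k : ℕ) i => μ i ^ k * b i) =
      ⊤ := by
  classical
  rw [eq_top_iff, ← (Pi.basisFun K ι).span_eq, span_le]
  rintro _ ⟨j, rfl⟩
  rw [Pi.basisFun_apply]
  rcases hab j with ha | hb
  · rw [← inv_smul_smul₀ ha (Pi.single j 1), ← Pi.single_smul, smul_eq_mul, mul_one]
    exact smul_mem _ _ (span_mono subset_union_left (single_mem_span_pow_mul hμ a j))
  · rw [← inv_smul_smul₀ hb (Pi.single j 1), ← Pi.single_smul, smul_eq_mul, mul_one]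
    exact smul_mem _ _ (span_mono subset_union_right (single_mem_span_pow_mul hμ b j))

end PowMulSpan

theorem Real.sin_ne_zero_or_mul_cos_add_ne_zero {α β : ℝ} (hadd : α + β ≠ 0) (hsub : α - β ≠ 0)
    (θ : ℝ) : Real.sin θ ≠ 0 ∨ α * Real.cos θ + β ≠ 0 := by
  by_contra! h
  obtain ⟨hsin, hlin⟩ := h
  have hcos_sq : Real.cos θ ^ 2 = 1 := by nlinarith [Real.sin_sq_add_cos_sq θ]
  rcases sq_eq_one_iff.mp hcos_sq with h | h <;> rw [h] at hlin
  · exact hadd (by linarith)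
  · exact hsub (by linarith)

/-- Lie algebra rank condition for an ensemble of `n` Theta neurons with distinct positive
natural frequencies `ωᵢ`: for every `Θ ∈ ℝⁿ`, the vectors
`v_k(Θ) = ((ωᵢ²/2)^{k−1} sin θᵢ)ᵢ`, `w_k(Θ) = ((ωᵢ²/2)^{k−1}((1+ωᵢ²/4)cos θᵢ + 1 − ωᵢ²/4))ᵢ`
for `k ≥ 1`, together with `f(Θ) = (1 + ωᵢ²/4 + (1 − ωᵢ²/4)cos θᵢ)ᵢ`, span `ℝⁿ`. -/
theorem theta_ensemble_larc (n : ℕ) (ω : Fin n → ℝ) (hpos : ∀ i, 0 < ω i)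
    (hdist : Function.Injective ω) (Θ : Fin n → ℝ) :
    Submodule.span ℝ
      (insert (fun i => 1 + ω i ^ 2 / 4 + (1 - ω i ^ 2 / 4) * Real.cos (Θ i))
        ({x : Fin n → ℝ | ∃ k : ℕ, 1 ≤ k ∧
          (x = fun i => (ω i ^ 2 / 2) ^ (k - 1) * Real.sin (Θ i)) } ∪
         {x : Fin n → ℝ | ∃ k : ℕ, 1 ≤ k ∧
          (x = fun i => (ω i ^ 2 / 2) ^ (k - 1)
              * ((1 + ω i ^ 2 / 4) * Real.cos (Θ i) + 1 - ω i ^ 2 / 4)) })) = ⊤ := by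
  have hμ : Function.Injective fun i => ω i ^ 2 / 2 := fun i j h =>
    hdist <| (pow_left_inj₀ (hpos i).le (hpos j).le two_ne_zero).mp (by linarith [h])
  have hab (i : Fin n) : Real.sin (Θ i) ≠ 0 ∨
      (1 + ω i ^ 2 / 4) * Real.cos (Θ i) + 1 - ω i ^ 2 / 4 ≠ 0 := by
    rw [add_sub_assoc]
    exact Real.sin_ne_zero_or_mul_cos_add_ne_zero (by ring_nf; norm_num)
      (by nlinarith [hpos i]) (Θ i)
  refine eq_top_iff.mpr ((span_pow_mul_union_eq_top hμ hab).ge.trans (span_mono ?_))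
  refine (union_subset_union ?_ ?_).trans (subset_insert _ _) <;>
    rintro _ ⟨k, rfl⟩ <;> exact ⟨k + 1, by omega, by simp⟩
end

section
/- For the SNIPER ensemble with f(Θ) = (ω₁,…,ωₙ)ᵀ constant and Z(Θ) = (zᵢ(1 − cos θᵢ))ᵢ, the iterated Lie brackets are ad_f^{2k−1} Z = ((−1)^{k−1} zᵢ ωᵢ^{2k−1} sin θᵢ)ᵢ and ad_f^{2k} Z = ((−1)^{k−1} zᵢ ωᵢ^{2k} cos θᵢ)ᵢ for each positive integer k, and if the ωᵢ are distinct positive reals and zᵢ ≠ 0 then span{f, Z, ad_f^m Z : m ≥ 1} = ℝⁿ at every point Θ. -/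
open Real

/-!
A constant drift `ω` acts on a diagonal field `Θ ↦ (gᵢ(θᵢ))ᵢ` by `gᵢ ↦ ωᵢ gᵢ'`, so
`ad_f^{m+1} Z = (zᵢ ωᵢ^{m+1} sin(θᵢ + mπ/2))ᵢ` and brackets two steps apart differ coordinatewise
by the factor `-ωᵢ²`. For fixed `i` one of `sin θᵢ`, `cos θᵢ` is nonzero, so `v = ad_f^r Z(Θ)` has
`vᵢ ≠ 0` for `r = 1` or `r = 2`. The nodes `-ωⱼ²` are distinct, so combining the vectors
`((-ωⱼ²)^k vⱼ)ⱼ` with the coefficients of the Lagrange polynomial that is `1` at `-ωᵢ²` and `0` at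
the other nodes gives `vᵢ eᵢ`.
-/

open Polynomial in
theorem eval_mul_mem_span_range_pow_mul {R ι : Type*} [CommRing R] (a v : ι → R) (p : R[X]) :
    (fun j => p.eval (a j) * v j) ∈
      Submodule.span R (Set.range fun k : ℕ => fun j => a j ^ k * v j) := by
  have hsum : (fun j => p.eval (a j) * v j)
      = ∑ k ∈ Finset.range (p.natDegree + 1), p.coeff k • fun j => a j ^ k * v j := by
    ext j
    simp [eval_eq_sum_range, Finset.sum_mul, mul_assoc]
  rw [hsum]
  exact Submodule.sum_mem _ fun k _ => Submodule.smul_mem _ _ (Submodule.subset_span ⟨k, rfl⟩)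

theorem Pi.single_mem_span_range_pow_mul {K ι : Type*} [Field K] [Fintype ι] [DecidableEq ι]
    {a : ι → K} (ha : Function.Injective a) (v : ι → K) (i : ι) :
    Pi.single i (v i) ∈ Submodule.span K (Set.range fun k : ℕ => fun j => a j ^ k * v j) := by
  convert eval_mul_mem_span_range_pow_mul a v (Lagrange.basis Finset.univ a i) using 1
  ext j
  rcases eq_or_ne j i with rfl | hji
  · simp [Lagrange.eval_basis_self ha.injOn (Finset.mem_univ j)]
  · simp [hji, Lagrange.eval_basis_of_ne hji.symm (Finset.mem_univ j)]

theorem lieBracketVF_const_diagonal {n : ℕ} (ω : Fin n → ℝ) {g g' : Fin n → ℝ → ℝ}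
    (hg : ∀ i x, HasDerivAt (g i) (g' i x) x) :
    lieBracketVF (fun _ => ω) (fun Θ i => g i (Θ i)) = fun Θ i => ω i * g' i (Θ i) := by
  funext Θ
  have hD : HasFDerivAt (fun Θ : Fin n → ℝ => fun i => g i (Θ i))
      (ContinuousLinearMap.pi fun i => g' i (Θ i) • ContinuousLinearMap.proj i) Θ :=
    hasFDerivAt_pi.2 fun i => (hg i (Θ i)).comp_hasFDerivAt Θ (hasFDerivAt_apply (𝕜 := ℝ) i Θ)
  ext i
  simp [lieBracketVF, hD.fderiv, mul_comm]

section Sniper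

variable {n : ℕ} (ω z : Fin n → ℝ)

theorem adVF_sniper_succ (m : ℕ) :
    adVF (fun _ => ω) (fun Θ i => z i * (1 - cos (Θ i))) (m + 1)
      = fun Θ i => z i * ω i ^ (m + 1) * sin (Θ i + m * (π / 2)) := by
  induction m with
  | zero =>
    have hderiv : ∀ i x, HasDerivAt (fun x => z i * (1 - cos x)) (z i * sin x) x := fun i x => by
      simpa using ((hasDerivAt_cos x).const_sub 1).const_mul (z i)
    rw [adVF, adVF, lieBracketVF_const_diagonal ω hderiv]
    funext Θ i
    simp only [Nat.cast_zero, zero_mul, add_zero]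
    ring
  | succ m ih =>
    have hderiv : ∀ i x, HasDerivAt (fun x => z i * ω i ^ (m + 1) * sin (x + m * (π / 2)))
        (z i * ω i ^ (m + 1) * cos (x + m * (π / 2))) x := fun i x => by
      simpa using ((hasDerivAt_sin _).comp x ((hasDerivAt_id x).add_const _)).const_mul _
    rw [adVF, ih, lieBracketVF_const_diagonal ω hderiv]
    funext Θ i
    rw [Nat.cast_succ, add_one_mul, ← add_assoc, sin_add_pi_div_two]
    ring

theorem adVF_sniper_two_mul_sub_one (k : ℕ) (hk : 1 ≤ k) :
    adVF (fun _ => ω) (fun Θ i => z i * (1 - cos (Θ i))) (2 * k - 1)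
      = fun Θ i => (-1 : ℝ) ^ (k - 1) * z i * ω i ^ (2 * k - 1) * sin (Θ i) := by
  obtain ⟨j, rfl⟩ := Nat.exists_eq_add_of_le' hk
  rw [show 2 * (j + 1) - 1 = 2 * j + 1 by omega, adVF_sniper_succ]
  funext Θ i
  rw [show ((2 * j : ℕ) : ℝ) * (π / 2) = j * π by push_cast; ring, sin_add_nat_mul_pi]
  simp only [Nat.add_sub_cancel]
  ring

theorem adVF_sniper_two_mul (k : ℕ) (hk : 1 ≤ k) :
    adVF (fun _ => ω) (fun Θ i => z i * (1 - cos (Θ i))) (2 * k)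
      = fun Θ i => (-1 : ℝ) ^ (k - 1) * z i * ω i ^ (2 * k) * cos (Θ i) := by
  obtain ⟨j, rfl⟩ := Nat.exists_eq_add_of_le' hk
  rw [show 2 * (j + 1) = (2 * j + 1) + 1 by omega, adVF_sniper_succ]
  funext Θ i
  rw [show ((2 * j + 1 : ℕ) : ℝ) * (π / 2) = j * π + π / 2 by push_cast; ring, ← add_assoc,
    sin_add_pi_div_two, cos_add_nat_mul_pi]
  simp only [Nat.add_sub_cancel]
  ring

theorem adVF_sniper_add_two_mul (Θ : Fin n → ℝ) (m k : ℕ) :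
    adVF (fun _ => ω) (fun Θ i => z i * (1 - cos (Θ i))) (m + 1 + 2 * k) Θ
      = fun i => (-ω i ^ 2) ^ k *
          adVF (fun _ => ω) (fun Θ i => z i * (1 - cos (Θ i))) (m + 1) Θ i := by
  rw [show m + 1 + 2 * k = m + 2 * k + 1 by omega, adVF_sniper_succ, adVF_sniper_succ]
  funext i
  dsimp only
  rw [show ((m + 2 * k : ℕ) : ℝ) * (π / 2) = m * (π / 2) + k * π by push_cast; ring, ← add_assoc,
    sin_add_nat_mul_pi, neg_pow (ω i ^ 2), ← pow_mul]
  ring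

theorem span_adVF_sniper_eq_top (hω : ∀ i, 0 < ω i) (hinj : Function.Injective ω)
    (hz : ∀ i, z i ≠ 0) (Θ : Fin n → ℝ) :
    Submodule.span ℝ {x | ∃ m : ℕ, 1 ≤ m ∧
      x = adVF (fun _ => ω) (fun Θ i => z i * (1 - cos (Θ i))) m Θ} = ⊤ := by
  set A := {x | ∃ m : ℕ, 1 ≤ m ∧ x = adVF (fun _ => ω) (fun Θ i => z i * (1 - cos (Θ i))) m Θ}
  have hsq : Function.Injective fun i => -ω i ^ 2 := fun i j hij =>
    hinj <| (pow_left_inj₀ (hω i).le (hω j).le two_ne_zero).1 (neg_inj.1 hij)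
  have hsingle : ∀ i, Pi.single i 1 ∈ Submodule.span ℝ A := by
    intro i
    obtain ⟨m, hm⟩ : ∃ m : ℕ,
        adVF (fun _ => ω) (fun Θ i => z i * (1 - cos (Θ i))) (m + 1) Θ i ≠ 0 := by
      have hnz : ∀ m : ℕ, z i * ω i ^ (m + 1) ≠ 0 := fun m =>
        mul_ne_zero (hz i) (pow_ne_zero _ (hω i).ne')
      have hsc : sin (Θ i) ≠ 0 ∨ cos (Θ i) ≠ 0 := by
        by_contra! h
        simpa [h.1, h.2] using sin_sq_add_cos_sq (Θ i)
      rcases hsc with hs | hc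
      · exact ⟨0, by simpa [adVF_sniper_succ] using mul_ne_zero (hnz 0) hs⟩
      · exact ⟨1, by simpa [adVF_sniper_succ, sin_add_pi_div_two] using mul_ne_zero (hnz 1) hc⟩
    have hsub : Set.range (fun k : ℕ => fun j => (-ω j ^ 2) ^ k *
        adVF (fun _ => ω) (fun Θ i => z i * (1 - cos (Θ i))) (m + 1) Θ j) ⊆ A := by
      rintro _ ⟨k, rfl⟩
      exact ⟨m + 1 + 2 * k, by omega, (adVF_sniper_add_two_mul ω z Θ m k).symm⟩
    have hmem := Submodule.span_mono hsub (Pi.single_mem_span_range_pow_mul hsq _ i)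
    rwa [← Submodule.smul_mem_iff _ hm, ← Pi.single_smul', smul_eq_mul, mul_one]
  rw [eq_top_iff, ← (Pi.basisFun ℝ (Fin n)).span_eq, Submodule.span_le]
  rintro _ ⟨i, rfl⟩
  simpa using hsingle i

end Sniper

/-- For the SNIPER ensemble with constant drift `f(Θ) = (ω₁,…,ωₙ)` and
`Z(Θ)ᵢ = zᵢ(1 − cos θᵢ)`, the iterated Lie brackets are
`ad_f^{2k−1} Z = ((−1)^{k−1} zᵢ ωᵢ^{2k−1} sin θᵢ)ᵢ` and
`ad_f^{2k} Z = ((−1)^{k−1} zᵢ ωᵢ^{2k} cos θᵢ)ᵢ` for `k ≥ 1`; and if the `ωᵢ` are distinct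
positive reals and `zᵢ ≠ 0` then `{f, Z} ∪ {ad_f^m Z : m ≥ 1}` spans `ℝⁿ` at every point. -/
theorem sniper_ensemble_lie_brackets_and_span (n : ℕ) (ω z : Fin n → ℝ)
    (f Z : (Fin n → ℝ) → (Fin n → ℝ))
    (hf : f = fun _ i => ω i)
    (hZ : Z = fun Θ i => z i * (1 - Real.cos (Θ i))) :
    (∀ k : ℕ, 1 ≤ k →
      (adVF f Z (2 * k - 1)
        = fun Θ i => (-1 : ℝ) ^ (k - 1) * z i * ω i ^ (2 * k - 1) * Real.sin (Θ i)) ∧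
      (adVF f Z (2 * k)
        = fun Θ i => (-1 : ℝ) ^ (k - 1) * z i * ω i ^ (2 * k) * Real.cos (Θ i))) ∧
    ((∀ i, 0 < ω i) → Function.Injective ω → (∀ i, z i ≠ 0) →
      ∀ Θ : Fin n → ℝ,
        Submodule.span ℝ
          ({f Θ, Z Θ} ∪ {x : Fin n → ℝ | ∃ m : ℕ, 1 ≤ m ∧ x = adVF f Z m Θ}) = ⊤) := by
  subst hf hZ
  refine ⟨fun k hk => ⟨adVF_sniper_two_mul_sub_one ω z k hk, adVF_sniper_two_mul ω z k hk⟩,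
    fun hω hinj hz Θ => eq_top_iff.2 ?_⟩
  rw [← span_adVF_sniper_eq_top ω z hω hinj hz Θ]
  exact Submodule.span_mono Set.subset_union_right
end

section
/- For the Sinusoidal PRC ensemble with f(Θ) = (ω₁,…,ωₙ)ᵀ and Z(Θ) = (zᵢ sin θᵢ)ᵢ, the iterated Lie brackets satisfy ad_f^{2k−1} Z = ((−1)^{k−1} zᵢ ωᵢ^{2k−1} cos θᵢ)ᵢ and ad_f^{2k} Z = ((−1)^{k} zᵢ ωᵢ^{2k} sin θᵢ)ᵢ, and if the ωᵢ > 0 are distinct and zᵢ ≠ 0 then these brackets together with Z span ℝⁿ at every point. -/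
open Real

/-!
Since `f` is constant and `Z` acts coordinatewise, bracketing with `f` differentiates each
coordinate and multiplies it by `ωᵢ`, which turns `sin` into `cos` and `cos` into `-sin`.
At a point `Θ`, up to sign, `ad_f^{2k} Z` and `ad_f^{2k+1} Z` are the vectors `(sᵢ rᵢ^k)ᵢ` and
`(cᵢ rᵢ^k)ᵢ` with `sᵢ = zᵢ sin θᵢ`, `cᵢ = zᵢ ωᵢ cos θᵢ`, `rᵢ = ωᵢ²`. The `rᵢ` are distinct, so
evaluating the Lagrange basis polynomials at them shows that the span contains `sᵢ eᵢ` and `cᵢ eᵢ`,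
and `sᵢ`, `cᵢ` never vanish simultaneously.
-/

theorem Submodule.eq_top_of_forall_exists_single_mem {K ι : Type*} [Field K] [Fintype ι]
    [DecidableEq ι] {p : Submodule K (ι → K)} (h : ∀ i, ∃ a ≠ 0, Pi.single i a ∈ p) :
    p = ⊤ := by
  refine eq_top_iff'.2 fun x => ?_
  rw [← Finset.univ_sum_single x]
  refine p.sum_mem fun i _ => ?_
  obtain ⟨a, ha, hmem⟩ := h i
  have : Pi.single i (x i) = (x i / a) • Pi.single i a := by
    rw [← Pi.single_smul, smul_eq_mul, div_mul_cancel₀ _ ha]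
  exact this ▸ p.smul_mem _ hmem

theorem Submodule.single_mem_of_forall_mul_pow_mem {K ι : Type*} [Field K] [Fintype ι]
    [DecidableEq ι] {p : Submodule K (ι → K)} {r c : ι → K} (hr : Function.Injective r)
    (h : ∀ k : ℕ, (fun j => c j * r j ^ k) ∈ p) (i : ι) : Pi.single i (c i) ∈ p := by
  have eval_mem : ∀ P : Polynomial K, (fun j => c j * P.eval (r j)) ∈ p := fun P => by
    have : (fun j => c j * P.eval (r j))
        = ∑ k ∈ Finset.range (P.natDegree + 1), P.coeff k • fun j => c j * r j ^ k := by
      ext j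
      simp only [Polynomial.eval_eq_sum_range, Finset.mul_sum, Finset.sum_apply,
        Pi.smul_apply, smul_eq_mul]
      exact Finset.sum_congr rfl fun k _ => by ring
    exact this ▸ p.sum_mem fun k _ => p.smul_mem _ (h k)
  convert eval_mem (Lagrange.basis Finset.univ r i) using 1
  ext j
  rcases eq_or_ne j i with rfl | hji
  · simp [Lagrange.eval_basis_self hr.injOn (Finset.mem_univ j)]
  · simp [Lagrange.eval_basis_of_ne hji.symm (Finset.mem_univ j), hji]

theorem lieBracketVF_const_diag {n : ℕ} (ω a : Fin n → ℝ) {h h' : ℝ → ℝ}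
    (hd : ∀ t, HasDerivAt h (h' t) t) :
    lieBracketVF (fun _ i => ω i) (fun Θ i => a i * h (Θ i))
      = fun Θ i => a i * ω i * h' (Θ i) := by
  funext Θ j
  have hdiag : HasFDerivAt (fun Θ : Fin n → ℝ => fun i => a i * h (Θ i))
      (ContinuousLinearMap.pi fun i => (a i * h' (Θ i)) • ContinuousLinearMap.proj i) Θ :=
    hasFDerivAt_pi.2 fun i =>
      ((hd (Θ i)).const_mul (a i)).comp_hasFDerivAt (f := fun Θ : Fin n → ℝ => Θ i) Θ
        (ContinuousLinearMap.proj (R := ℝ) (φ := fun _ : Fin n => ℝ) i).hasFDerivAt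
  simp [lieBracketVF, hdiag.fderiv, mul_right_comm]

theorem adVF_sin_even_odd {n : ℕ} (ω z : Fin n → ℝ) (k : ℕ) :
    adVF (fun _ i => ω i) (fun Θ i => z i * sin (Θ i)) (2 * k)
        = (fun Θ i => (-1 : ℝ) ^ k * z i * ω i ^ (2 * k) * sin (Θ i)) ∧
      adVF (fun _ i => ω i) (fun Θ i => z i * sin (Θ i)) (2 * k + 1)
        = fun Θ i => (-1 : ℝ) ^ k * z i * ω i ^ (2 * k + 1) * cos (Θ i) := by
  have odd_of_even : ∀ k, adVF (fun _ i => ω i) (fun Θ i => z i * sin (Θ i)) (2 * k)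
      = (fun Θ i => (-1 : ℝ) ^ k * z i * ω i ^ (2 * k) * sin (Θ i)) →
      adVF (fun _ i => ω i) (fun Θ i => z i * sin (Θ i)) (2 * k + 1)
        = fun Θ i => (-1 : ℝ) ^ k * z i * ω i ^ (2 * k + 1) * cos (Θ i) := fun k hk => by
    rw [adVF, hk, lieBracketVF_const_diag ω _ hasDerivAt_sin]
    funext Θ i
    ring
  induction k with
  | zero =>
    have : adVF (fun _ i => ω i) (fun Θ i => z i * sin (Θ i)) 0
        = (fun Θ i => (-1 : ℝ) ^ 0 * z i * ω i ^ (2 * 0) * sin (Θ i)) := by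
      funext Θ i
      simp [adVF]
    exact ⟨this, odd_of_even 0 this⟩
  | succ k ih =>
    have even : adVF (fun _ i => ω i) (fun Θ i => z i * sin (Θ i)) (2 * (k + 1))
        = (fun Θ i => (-1 : ℝ) ^ (k + 1) * z i * ω i ^ (2 * (k + 1)) * sin (Θ i)) := by
      rw [show 2 * (k + 1) = 2 * k + 1 + 1 by ring, adVF, ih.2,
        lieBracketVF_const_diag ω _ hasDerivAt_cos]
      funext Θ i
      ring
    exact ⟨even, odd_of_even _ even⟩

def bracketSpan {n : ℕ} (f Z : (Fin n → ℝ) → (Fin n → ℝ)) (Θ : Fin n → ℝ) :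
    Submodule ℝ (Fin n → ℝ) :=
  Submodule.span ℝ (insert (Z Θ) {x : Fin n → ℝ | ∃ m : ℕ, 1 ≤ m ∧ x = adVF f Z m Θ})

theorem adVF_mem_bracketSpan {n : ℕ} (f Z : (Fin n → ℝ) → (Fin n → ℝ)) (Θ : Fin n → ℝ)
    (m : ℕ) : adVF f Z m Θ ∈ bracketSpan f Z Θ := by
  refine Submodule.subset_span ?_
  rcases m with _ | m
  · exact Set.mem_insert _ _
  · exact Set.mem_insert_of_mem _ ⟨m + 1, m.succ_pos, rfl⟩

theorem bracketSpan_sin_eq_top {n : ℕ} {ω z : Fin n → ℝ} (hω : ∀ i, 0 < ω i)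
    (hω_inj : Function.Injective ω) (hz : ∀ i, z i ≠ 0) (Θ : Fin n → ℝ) :
    bracketSpan (fun _ i => ω i) (fun Θ i => z i * sin (Θ i)) Θ = ⊤ := by
  set p := bracketSpan (fun _ i => ω i) (fun Θ i => z i * sin (Θ i)) Θ
  have hsq_inj : Function.Injective fun i => ω i ^ 2 := fun i j hij =>
    hω_inj <| (pow_left_inj₀ (hω i).le (hω j).le two_ne_zero).1 hij
  have hsign (k : ℕ) : (-1 : ℝ) ^ k * (-1) ^ k = 1 := by
    rw [← pow_add, ← two_mul, pow_mul, neg_one_sq, one_pow]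
  have hsin (k : ℕ) : (fun j => z j * sin (Θ j) * (ω j ^ 2) ^ k) ∈ p := by
    convert p.smul_mem ((-1 : ℝ) ^ k) (adVF_mem_bracketSpan _ _ Θ (2 * k)) using 1
    funext j
    rw [(adVF_sin_even_odd ω z k).1, Pi.smul_apply, smul_eq_mul]
    linear_combination (-(z j * ω j ^ (2 * k) * sin (Θ j))) * hsign k
  have hcos (k : ℕ) : (fun j => z j * ω j * cos (Θ j) * (ω j ^ 2) ^ k) ∈ p := by
    convert p.smul_mem ((-1 : ℝ) ^ k) (adVF_mem_bracketSpan _ _ Θ (2 * k + 1)) using 1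
    funext j
    rw [(adVF_sin_even_odd ω z k).2, Pi.smul_apply, smul_eq_mul]
    linear_combination (-(z j * ω j ^ (2 * k + 1) * cos (Θ j))) * hsign k
  refine Submodule.eq_top_of_forall_exists_single_mem fun i => ?_
  have hsin_or_cos : sin (Θ i) ≠ 0 ∨ cos (Θ i) ≠ 0 := by
    by_contra! h
    simpa [h.1, h.2] using sin_sq_add_cos_sq (Θ i)
  rcases hsin_or_cos with hs | hc
  · exact ⟨_, mul_ne_zero (hz i) hs, Submodule.single_mem_of_forall_mul_pow_mem hsq_inj hsin i⟩
  · exact ⟨_, mul_ne_zero (mul_ne_zero (hz i) (hω i).ne') hc,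
      Submodule.single_mem_of_forall_mul_pow_mem hsq_inj hcos i⟩

/-- For the Sinusoidal PRC ensemble with constant drift `f(Θ) = (ω₁,…,ωₙ)` and
`Z(Θ)ᵢ = zᵢ sin θᵢ`, the iterated Lie brackets are
`ad_f^{2k−1} Z = ((−1)^{k−1} zᵢ ωᵢ^{2k−1} cos θᵢ)ᵢ` and
`ad_f^{2k} Z = ((−1)^{k} zᵢ ωᵢ^{2k} sin θᵢ)ᵢ` for `k ≥ 1`; and if the `ωᵢ > 0` are distinct
and `zᵢ ≠ 0` then these brackets together with `Z` span `ℝⁿ` at every point. -/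
theorem sinusoidal_ensemble_lie_brackets_and_span (n : ℕ) (ω z : Fin n → ℝ)
    (f Z : (Fin n → ℝ) → (Fin n → ℝ))
    (hf : f = fun _ i => ω i)
    (hZ : Z = fun Θ i => z i * Real.sin (Θ i)) :
    (∀ k : ℕ, 1 ≤ k →
      (adVF f Z (2 * k - 1)
        = fun Θ i => (-1 : ℝ) ^ (k - 1) * z i * ω i ^ (2 * k - 1) * Real.cos (Θ i)) ∧
      (adVF f Z (2 * k)
        = fun Θ i => (-1 : ℝ) ^ k * z i * ω i ^ (2 * k) * Real.sin (Θ i))) ∧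
    ((∀ i, 0 < ω i) → Function.Injective ω → (∀ i, z i ≠ 0) →
      ∀ Θ : Fin n → ℝ,
        Submodule.span ℝ
          (insert (Z Θ) {x : Fin n → ℝ | ∃ m : ℕ, 1 ≤ m ∧ x = adVF f Z m Θ}) = ⊤) := by
  subst hf hZ
  refine ⟨fun k hk => ?_, bracketSpan_sin_eq_top⟩
  obtain ⟨m, rfl⟩ := Nat.exists_eq_add_of_le' hk
  rw [show 2 * (m + 1) - 1 = 2 * m + 1 by omega, Nat.add_sub_cancel]
  exact ⟨(adVF_sin_even_odd ω z m).2, (adVF_sin_even_odd ω z (m + 1)).1⟩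
end

section
/- (No-crossing lemma) Let θ₁, θ₂ solve θ̇ᵢ = (1+Iᵢ) + (1−Iᵢ)cos θᵢ + (1 − cos θᵢ)u(t) with the same continuous input u, θ₁(0) = θ₂(0) = 0, and 0 < I₁ < I₂. Then θ₁(t) ≤ θ₂(t) for all t ≥ 0; moreover equality at a time τ > 0 can hold only when θ₁(τ) = θ₂(τ) ∈ 2πℤ. -/
/-!
Along the difference `d = θ₁ - θ₂` the right-hand sides differ by
`(I₁ - I₂)(1 - cos θ₁) + (1 - I₂ - u)(cos θ₁ - cos θ₂)`. The first term is never positive and the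
second is at most `K |d|` on a compact time interval, so `d' ≤ K d` wherever `d ≥ 0`, and a
Grönwall-type comparison keeps `d ≤ 0`. At a touching time `τ > 0` the difference has a local
maximum, so its derivative `(I₁ - I₂)(1 - cos θ)` vanishes, forcing `cos θ = 1`.
-/

open Real Set Filter Topology

theorem nonpos_of_hasDerivWithinAt_le_mul {d d' : ℝ → ℝ} {a b K : ℝ}
    (hd : ContinuousOn d (Icc a b)) (hd' : ∀ x ∈ Ico a b, HasDerivWithinAt d (d' x) (Ici x) x)
    (ha : d a ≤ 0) (bound : ∀ x ∈ Ico a b, 0 ≤ d x → d' x ≤ K * d x) :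
    ∀ x ∈ Icc a b, d x ≤ 0 := by
  intro x hx
  set E : ℝ → ℝ := fun y => exp ((K + 1) * (y - a))
  -- the slope of the barrier `ε E` strictly exceeds `K` times its value, so `d` cannot cross it
  have hbarrier : ∀ ε > 0, d x ≤ ε * E x := by
    intro ε hε
    have hE : ∀ y, HasDerivAt (fun y => ε * E y) (ε * (E y * ((K + 1) * 1))) y := fun y =>
      ((((hasDerivAt_id y).sub_const a).const_mul (K + 1)).exp).const_mul ε
    refine image_le_of_deriv_right_lt_deriv_boundary' hd hd' (by simpa [E] using ha.trans hε.le)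
      (fun y _ => (hE y).continuousAt.continuousWithinAt) (fun y _ => (hE y).hasDerivWithinAt)
      (fun y hy hdy => ?_) hx
    have hpos : 0 < ε * E y := mul_pos hε (exp_pos _)
    calc d' y ≤ K * (ε * E y) := hdy ▸ bound y hy (hdy ▸ hpos.le)
      _ < ε * (E y * ((K + 1) * 1)) := by nlinarith
  have hlim : Tendsto (fun ε => ε * E x) (𝓝[>] 0) (𝓝 0) := by
    simpa using ((tendsto_id (x := 𝓝 (0 : ℝ))).mul_const (E x)).mono_left nhdsWithin_le_nhds
  exact ge_of_tendsto hlim (eventually_nhdsWithin_of_forall hbarrier)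

noncomputable def thetaDrift (I u θ : ℝ) : ℝ := (1 + I) + (1 - I) * cos θ + (1 - cos θ) * u

theorem thetaDrift_sub_thetaDrift (I₁ I₂ u θ₁ θ₂ : ℝ) :
    thetaDrift I₁ u θ₁ - thetaDrift I₂ u θ₂ =
      (I₁ - I₂) * (1 - cos θ₁) + (1 - I₂ - u) * (cos θ₁ - cos θ₂) := by
  unfold thetaDrift
  ring

theorem thetaDrift_sub_thetaDrift_le {I₁ I₂ u K : ℝ} (hI : I₁ ≤ I₂) (hK : |1 - I₂ - u| ≤ K)
    (θ₁ θ₂ : ℝ) : thetaDrift I₁ u θ₁ - thetaDrift I₂ u θ₂ ≤ K * |θ₁ - θ₂| := by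
  have hcurrent : (I₁ - I₂) * (1 - cos θ₁) ≤ 0 :=
    mul_nonpos_of_nonpos_of_nonneg (sub_nonpos.2 hI) (sub_nonneg.2 (cos_le_one θ₁))
  have hcoupling : (1 - I₂ - u) * (cos θ₁ - cos θ₂) ≤ K * |θ₁ - θ₂| :=
    calc (1 - I₂ - u) * (cos θ₁ - cos θ₂)
        ≤ |1 - I₂ - u| * |cos θ₁ - cos θ₂| := by rw [← abs_mul]; exact le_abs_self _
      _ ≤ K * |θ₁ - θ₂| :=
        mul_le_mul hK (abs_cos_sub_cos_le θ₁ θ₂) (abs_nonneg _) ((abs_nonneg _).trans hK)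
  rw [thetaDrift_sub_thetaDrift]
  linarith

theorem thetaDrift_sub_thetaDrift_self (I₁ I₂ u θ : ℝ) :
    thetaDrift I₁ u θ - thetaDrift I₂ u θ = (I₁ - I₂) * (1 - cos θ) := by
  rw [thetaDrift_sub_thetaDrift, sub_self, mul_zero, add_zero]

theorem theta_le_theta_of_le {I₁ I₂ : ℝ} (hI : I₁ ≤ I₂) {u : ℝ → ℝ} (hu : Continuous u)
    {θ₁ θ₂ : ℝ → ℝ} (hθ₁ : ∀ t, HasDerivAt θ₁ (thetaDrift I₁ (u t) (θ₁ t)) t)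
    (hθ₂ : ∀ t, HasDerivAt θ₂ (thetaDrift I₂ (u t) (θ₂ t)) t) {a : ℝ} (ha : θ₁ a ≤ θ₂ a) :
    ∀ t, a ≤ t → θ₁ t ≤ θ₂ t := by
  intro t ht
  obtain ⟨K, hK⟩ := isCompact_Icc.exists_bound_of_continuousOn
    (continuous_const.sub hu).continuousOn (s := Icc a t) (f := fun s => 1 - I₂ - u s)
  have hderiv : ∀ s, HasDerivAt (fun s => θ₁ s - θ₂ s)
      (thetaDrift I₁ (u s) (θ₁ s) - thetaDrift I₂ (u s) (θ₂ s)) s :=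
    fun s => (hθ₁ s).sub (hθ₂ s)
  have hbound : ∀ s ∈ Ico a t, 0 ≤ θ₁ s - θ₂ s →
      thetaDrift I₁ (u s) (θ₁ s) - thetaDrift I₂ (u s) (θ₂ s) ≤ K * (θ₁ s - θ₂ s) := by
    intro s hs hd
    rw [← abs_of_nonneg hd]
    exact thetaDrift_sub_thetaDrift_le hI (hK s (Ico_subset_Icc_self hs)) _ _
  exact sub_nonpos.1 <| nonpos_of_hasDerivWithinAt_le_mul
    (fun s _ => (hderiv s).continuousAt.continuousWithinAt)
    (fun s _ => (hderiv s).hasDerivWithinAt) (sub_nonpos.2 ha) hbound t ⟨ht, le_rfl⟩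

theorem cos_eq_one_of_isLocalMax_sub {I₁ I₂ u τ : ℝ} (hI : I₁ < I₂) {θ₁ θ₂ : ℝ → ℝ}
    (hθ₁ : HasDerivAt θ₁ (thetaDrift I₁ u (θ₁ τ)) τ)
    (hθ₂ : HasDerivAt θ₂ (thetaDrift I₂ u (θ₂ τ)) τ)
    (hmax : IsLocalMax (fun t => θ₁ t - θ₂ t) τ) (heq : θ₁ τ = θ₂ τ) : cos (θ₁ τ) = 1 := by
  have hzero := hmax.hasDerivAt_eq_zero (hθ₁.sub hθ₂)
  rw [← heq, thetaDrift_sub_thetaDrift_self] at hzero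
  have := (mul_eq_zero.1 hzero).resolve_left (sub_ne_zero.2 hI.ne)
  linarith

theorem theta_neuron_no_crossing_general (I₁ I₂ : ℝ) (hI₁₂ : I₁ < I₂)
    (u : ℝ → ℝ) (hu : Continuous u) (θ₁ θ₂ : ℝ → ℝ)
    (hθ₁ : ∀ t, HasDerivAt θ₁
      ((1 + I₁) + (1 - I₁) * Real.cos (θ₁ t) + (1 - Real.cos (θ₁ t)) * u t) t)
    (hθ₂ : ∀ t, HasDerivAt θ₂
      ((1 + I₂) + (1 - I₂) * Real.cos (θ₂ t) + (1 - Real.cos (θ₂ t)) * u t) t)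
    (h0₁ : θ₁ 0 = 0) (h0₂ : θ₂ 0 = 0) :
    (∀ t : ℝ, 0 ≤ t → θ₁ t ≤ θ₂ t) ∧
    (∀ τ : ℝ, 0 < τ → θ₁ τ = θ₂ τ → ∃ k : ℤ, θ₁ τ = 2 * π * k) := by
  have hle : ∀ t : ℝ, 0 ≤ t → θ₁ t ≤ θ₂ t :=
    theta_le_theta_of_le hI₁₂.le hu hθ₁ hθ₂ (h0₁.trans h0₂.symm).le
  refine ⟨hle, fun τ hτ heq => ?_⟩
  have hmax : IsLocalMax (fun t => θ₁ t - θ₂ t) τ := by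
    filter_upwards [eventually_gt_nhds hτ] with t ht
    rw [heq, sub_self]
    exact sub_nonpos.2 (hle t ht.le)
  obtain ⟨k, hk⟩ :=
    (cos_eq_one_iff _).1 (cos_eq_one_of_isLocalMax_sub hI₁₂ (hθ₁ τ) (hθ₂ τ) hmax heq)
  exact ⟨k, by rw [← hk]; ring⟩

/-- No-crossing lemma: if `θ₁, θ₂` solve
`θ̇ᵢ = (1+Iᵢ) + (1−Iᵢ)cos θᵢ + (1 − cos θᵢ)u(t)` with the same continuous input `u`,
`θ₁(0) = θ₂(0) = 0`, and `0 < I₁ < I₂`, then `θ₁(t) ≤ θ₂(t)` for all `t ≥ 0`; moreover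
equality at a time `τ > 0` can only hold when `θ₁(τ) = θ₂(τ) ∈ 2πℤ`. -/
theorem theta_neuron_no_crossing (I₁ I₂ : ℝ) (hI₁ : 0 < I₁) (hI₁₂ : I₁ < I₂)
    (u : ℝ → ℝ) (hu : Continuous u) (θ₁ θ₂ : ℝ → ℝ)
    (hθ₁ : ∀ t, HasDerivAt θ₁
      ((1 + I₁) + (1 - I₁) * Real.cos (θ₁ t) + (1 - Real.cos (θ₁ t)) * u t) t)
    (hθ₂ : ∀ t, HasDerivAt θ₂
      ((1 + I₂) + (1 - I₂) * Real.cos (θ₂ t) + (1 - Real.cos (θ₂ t)) * u t) t)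
    (h0₁ : θ₁ 0 = 0) (h0₂ : θ₂ 0 = 0) :
    (∀ t : ℝ, 0 ≤ t → θ₁ t ≤ θ₂ t) ∧
    (∀ τ : ℝ, 0 < τ → θ₁ τ = θ₂ τ → ∃ k : ℤ, θ₁ τ = 2 * π * k) :=
  theta_neuron_no_crossing_general I₁ I₂ hI₁₂ u hu θ₁ θ₂ hθ₁ hθ₂ h0₁ h0₂
end

section
/- At a point (θ₁, θ₂) with θ₁ ≡ 2mπ and θ₂ ≡ 2(n+m)π (m, n ∈ ℤ), the phase velocities of the two-Theta-neuron system equal θ̇₁ = θ̇₂ = 2 regardless of the control input u; consequently no control can keep the system at such a point or on the line θ₁ = θ₂ + 2nπ unless I₁ = I₂. -/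
open Real

lemma cos_two_pi_mul_intCast (k : ℤ) : cos (2 * π * k) = 1 :=
  (cos_eq_one_iff _).2 ⟨k, by ring⟩

lemma add_mul_cos_add_mul_eq_of_cos_eq_one (α β u : ℝ) {θ : ℝ} (h : cos θ = 1) :
    α + β * cos θ + (1 - cos θ) * u = α + β := by
  rw [h]; ring

lemma cos_eq_one_of_velocity_eq {I₁ I₂ c u : ℝ} (hI : I₁ ≠ I₂)
    (h : (1 + I₁) + (1 - I₁) * c + (1 - c) * u = (1 + I₂) + (1 - I₂) * c + (1 - c) * u) :
    c = 1 := by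
  have hprod : (I₁ - I₂) * (1 - c) = 0 := by linarith
  have hsub : I₁ - I₂ ≠ 0 := sub_ne_zero.2 hI
  linarith [(mul_eq_zero.1 hprod).resolve_left hsub]

/-- At a point with `θ₁ = 2mπ` and `θ₂ = 2(n+m)π` (`m, n ∈ ℤ`), the phase velocities of the
two-Theta-neuron system `θ̇ᵢ = αᵢ + βᵢcos θᵢ + (1 − cos θᵢ)u` (with `αᵢ = 1 + Iᵢ`,
`βᵢ = 1 − Iᵢ`) equal `θ̇₁ = θ̇₂ = 2` regardless of the control input `u`; consequently, when
`I₁ ≠ I₂`, no control can keep the system on the line `θ₁ = θ₂ + 2nπ`: equality of the phase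
velocities there forces `θ₁ ∈ 2πℤ`. -/
theorem two_theta_neuron_velocity_two (I₁ I₂ : ℝ) (hI : I₁ ≠ I₂) :
    (∀ (m n : ℤ) (u : ℝ),
      (1 + I₁) + (1 - I₁) * Real.cos (2 * π * m) + (1 - Real.cos (2 * π * m)) * u = 2 ∧
      (1 + I₂) + (1 - I₂) * Real.cos (2 * π * (n + m))
        + (1 - Real.cos (2 * π * (n + m))) * u = 2) ∧
    (∀ (n : ℤ) (θ₁ θ₂ u : ℝ), θ₁ = θ₂ + 2 * π * n →
      (1 + I₁) + (1 - I₁) * Real.cos θ₁ + (1 - Real.cos θ₁) * u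
        = (1 + I₂) + (1 - I₂) * Real.cos θ₂ + (1 - Real.cos θ₂) * u →
      ∃ m : ℤ, θ₁ = 2 * π * m) := by
  refine ⟨fun m n u => ⟨?_, ?_⟩, fun n θ₁ θ₂ u hθ hvel => ?_⟩
  · rw [add_mul_cos_add_mul_eq_of_cos_eq_one _ _ u (cos_two_pi_mul_intCast m)]
    ring
  · have hcos : cos (2 * π * (n + m)) = 1 := by exact_mod_cast cos_two_pi_mul_intCast (n + m)
    rw [add_mul_cos_add_mul_eq_of_cos_eq_one _ _ u hcos]
    ring
  · have hcos : cos θ₂ = cos θ₁ := by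
      rw [hθ, ← cos_add_int_mul_two_pi θ₂ n]
      ring_nf
    rw [hcos] at hvel
    obtain ⟨m, hm⟩ := (cos_eq_one_iff θ₁).1 (cos_eq_one_of_velocity_eq hI hvel)
    exact ⟨m, by rw [← hm]; ring⟩
end
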